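/- arXiv:2205.05274 — 2 statements merged into one kernel-verified Lean document; each statement's English description precedes it below -/
import Mathlib

section
/- Let G be a connected finite simple graph with at least 2 vertices and let P_n be the path on n ≥ 2 vertices. Then γ_{P,c}(G □ P_n) ≤ γ_c(G). -/
open SimpleGraph

variable {V : Type*} {α β : Type*}

/-- The monitored set `M(S)`: least set containing the closed neighborhood of `S`
and closed under the propagation rule (a monitored vertex all of whose neighbors,
except possibly one, are monitored forces that remaining neighbor). -/
inductive Monitored (G : SimpleGraph V) (S : Set V) : V → Prop
  | mem : ∀ {v}, v ∈ S → Monitored G S v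
  | dom : ∀ {v w}, v ∈ S → G.Adj v w → Monitored G S w
  | prop : ∀ {v w}, Monitored G S v → G.Adj v w →
      (∀ u, G.Adj v u → u ≠ w → Monitored G S u) → Monitored G S w

/-- `S` is a power dominating set of `G`. -/
def IsPDS (G : SimpleGraph V) (S : Set V) : Prop := ∀ v, Monitored G S v

/-- `S` is a connected power dominating set of `G`. -/
def IsCPDS (G : SimpleGraph V) (S : Set V) : Prop :=
  IsPDS G S ∧ (G.induce S).Connected

/-- The connected power domination number `γ_{P,c}(G)`. -/
noncomputable def cpdn (G : SimpleGraph V) : ℕ :=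
  sInf {n | ∃ S : Finset V, S.card = n ∧ IsCPDS G (S : Set V)}

/-- Zero-forcing: least set containing `Z` closed under the color-change rule. -/
inductive Forced (G : SimpleGraph V) (Z : Set V) : V → Prop
  | mem : ∀ {v}, v ∈ Z → Forced G Z v
  | force : ∀ {v w}, Forced G Z v → G.Adj v w →
      (∀ u, G.Adj v u → u ≠ w → Forced G Z u) → Forced G Z w

/-- `Z` is a zero forcing set of `G`. -/
def IsZFS (G : SimpleGraph V) (Z : Set V) : Prop := ∀ v, Forced G Z v

/-- `Z` is a connected zero forcing set of `G`. -/
def IsCZFS (G : SimpleGraph V) (Z : Set V) : Prop :=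
  IsZFS G Z ∧ (G.induce Z).Connected

/-- The connected zero forcing number `Z_c(G)`. -/
noncomputable def czfn (G : SimpleGraph V) : ℕ :=
  sInf {n | ∃ Z : Finset V, Z.card = n ∧ IsCZFS G (Z : Set V)}

/-- `S` is a dominating set of `G`: `N[S] = V(G)`. -/
def IsDomSet (G : SimpleGraph V) (S : Set V) : Prop :=
  ∀ v, ∃ u ∈ S, u = v ∨ G.Adj u v

/-- `S` is a connected dominating set of `G`. -/
def IsCDS (G : SimpleGraph V) (S : Set V) : Prop :=
  IsDomSet G S ∧ (G.induce S).Connected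

/-- The domination number `γ(G)`. -/
noncomputable def domNum (G : SimpleGraph V) : ℕ :=
  sInf {n | ∃ S : Finset V, S.card = n ∧ IsDomSet G (S : Set V)}

/-- The connected domination number `γ_c(G)`. -/
noncomputable def cdomNum (G : SimpleGraph V) : ℕ :=
  sInf {n | ∃ S : Finset V, S.card = n ∧ IsCDS G (S : Set V)}

/-- The lexicographic product `G ∘ H`. -/
def lexProd (G : SimpleGraph α) (H : SimpleGraph β) : SimpleGraph (α × β) where
  Adj x y := G.Adj x.1 y.1 ∨ (x.1 = y.1 ∧ H.Adj x.2 y.2)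
  symm := ⟨by
    rintro ⟨a, b⟩ ⟨c, d⟩ (h | ⟨h1, h2⟩)
    · exact Or.inl h.symm
    · exact Or.inr ⟨h1.symm, h2.symm⟩⟩
  loopless := ⟨by
    rintro ⟨a, b⟩ (h | ⟨-, h⟩)
    · exact G.loopless.irrefl a h
    · exact H.loopless.irrefl b h⟩

/-- The tensor (direct) product `G × H`. -/
def tensorProd (G : SimpleGraph α) (H : SimpleGraph β) : SimpleGraph (α × β) where
  Adj x y := G.Adj x.1 y.1 ∧ H.Adj x.2 y.2
  symm := ⟨fun _ _ ⟨h1, h2⟩ => ⟨h1.symm, h2.symm⟩⟩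
  loopless := ⟨fun x ⟨h1, _⟩ => G.loopless.irrefl x.1 h1⟩

/-- A vertex `v` is universal in `G`. -/
def IsUniversal (G : SimpleGraph V) (v : V) : Prop := ∀ w, w ≠ v → G.Adj v w

/-- The join of a single vertex (`none`) with the graph `G` (on `some` vertices). -/
def coneGraph (G : SimpleGraph α) : SimpleGraph (Option α) where
  Adj x y := match x, y with
    | none, none => False
    | none, some _ => True
    | some _, none => True
    | some a, some b => G.Adj a b
  symm := ⟨by rintro (_ | a) (_ | b) h <;> first | trivial | exact h.symm⟩
  loopless := ⟨by rintro (_ | a) h <;> first | trivial | exact G.loopless.irrefl a h⟩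

/-- The wheel `W_n`: the join of a single vertex with the cycle `C_n`. -/
def wheelGraph (n : ℕ) : SimpleGraph (Option (Fin n)) := coneGraph (cycleGraph n)

/-- The fan `F_n`: the join of a single vertex with the path `P_n`. -/
def fanGraph (n : ℕ) : SimpleGraph (Option (Fin n)) := coneGraph (pathGraph n)

/-
Take a minimum connected dominating set `D` of `G` and place it in the first layer `G × {0}`.
It dominates that layer, and it stays connected there. Once layers `0, …, k` are monitored,
every vertex `(v, k)` has a single unmonitored neighbour, namely `(v, k + 1)`, which it therefore
forces; so the monitoring propagates up the path one layer at a time.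
-/

theorem cpdn_le_card {G : SimpleGraph α} {S : Finset α} (hS : IsCPDS G (S : Set α)) :
    cpdn G ≤ S.card :=
  Nat.sInf_le ⟨S, rfl, hS⟩

theorem exists_isCDS_card_eq_cdomNum [Fintype α] {G : SimpleGraph α} (hG : G.Connected) :
    ∃ S : Finset α, IsCDS G (S : Set α) ∧ S.card = cdomNum G := by
  have huniv : IsCDS G ((Finset.univ : Finset α) : Set α) := by
    refine ⟨fun v => ⟨v, by simp, Or.inl rfl⟩, ?_⟩
    rw [Finset.coe_univ]
    exact (induceUnivIso G).connected_iff.mpr hG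
  obtain ⟨S, hcard, hS⟩ : cdomNum G ∈ {m | ∃ S : Finset α, S.card = m ∧ IsCDS G (S : Set α)} :=
    Nat.sInf_mem ⟨_, Finset.univ, rfl, huniv⟩
  exact ⟨S, hS, hcard⟩

theorem SimpleGraph.Connected.induce_image {G : SimpleGraph α} {H : SimpleGraph β} (f : G →g H)
    {s : Set α} (hs : (G.induce s).Connected) : (H.induce (f '' s)).Connected :=
  hs.map (induceHom f (Set.mapsTo_image f s)) (Set.surjective_mapsTo_image_restrict f s)

theorem IsDomSet.monitored_boxProd {G : SimpleGraph α} {S : Set α} (hS : IsDomSet G S)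
    (H : SimpleGraph β) (b : β) (a : α) : Monitored (G □ H) ((·, b) '' S) (a, b) := by
  obtain ⟨u, hu, rfl | hua⟩ := hS a
  · exact .mem ⟨u, hu, rfl⟩
  · exact .dom ⟨u, hu, rfl⟩ (boxProd_adj_left.mpr hua)

theorem snd_le_or_eq_succ_of_boxProd_pathGraph_adj {G : SimpleGraph α} {n : ℕ}
    {x y : α × Fin n} (h : (G □ pathGraph n).Adj x y) :
    y.2.val ≤ x.2.val ∨ y.1 = x.1 ∧ y.2.val = x.2.val + 1 := by
  rcases boxProd_adj.mp h with ⟨-, h2⟩ | ⟨hp, h1⟩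
  · exact .inl (le_of_eq (congrArg Fin.val h2.symm))
  · rcases pathGraph_adj.mp hp with hp | hp
    · exact .inr ⟨h1.symm, hp.symm⟩
    · exact .inl (by omega)

theorem isPDS_boxProd_pathGraph_of_monitored_layer_zero {G : SimpleGraph α} {n : ℕ} (hn : 0 < n)
    {S : Set (α × Fin n)} (h0 : ∀ a, Monitored (G □ pathGraph n) S (a, ⟨0, hn⟩)) :
    IsPDS (G □ pathGraph n) S := by
  suffices ∀ k, ∀ x : α × Fin n, x.2.val ≤ k → Monitored (G □ pathGraph n) S x from
    fun x => this _ x le_rfl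
  intro k
  induction k with
  | zero =>
    rintro ⟨a, j⟩ (hj : j.val ≤ 0)
    obtain rfl : j = ⟨0, hn⟩ := Fin.ext (Nat.le_zero.mp hj)
    exact h0 a
  | succ k ih =>
    rintro ⟨a, j⟩ (hj : j.val ≤ k + 1)
    rcases Nat.lt_or_eq_of_le hj with hj | hj
    · exact ih _ (Nat.lt_succ_iff.mp hj)
    have hk : k < n := by omega
    have hkj : (G □ pathGraph n).Adj (a, ⟨k, hk⟩) (a, j) :=
      boxProd_adj_right.mpr (pathGraph_adj.mpr (.inl hj.symm))
    refine .prop (ih _ le_rfl) hkj fun y hy hne => ih y ?_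
    rcases snd_le_or_eq_succ_of_boxProd_pathGraph_adj hy with hle | ⟨h1, h2⟩
    · exact hle
    · exact (hne (Prod.ext h1 (Fin.ext (h2.trans hj.symm)))).elim

theorem IsCDS.isCPDS_boxProd_pathGraph {G : SimpleGraph α} {S : Set α} (hS : IsCDS G S)
    {n : ℕ} (hn : 0 < n) : IsCPDS (G □ pathGraph n) ((·, ⟨0, hn⟩) '' S) :=
  ⟨isPDS_boxProd_pathGraph_of_monitored_layer_zero hn (hS.1.monitored_boxProd _ _),
    hS.2.induce_image (boxProdLeft G (pathGraph n) ⟨0, hn⟩).toHom⟩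

theorem stmt_5_general {α : Type*} [Fintype α]
    (G : SimpleGraph α) (hG : G.Connected)
    (n : ℕ) (hn : 2 ≤ n) :
    cpdn (G □ pathGraph n) ≤ cdomNum G := by
  classical
  obtain ⟨S, hS, hcard⟩ := exists_isCDS_card_eq_cdomNum hG
  have hn0 : 0 < n := by omega
  let T := S.image (·, (⟨0, hn0⟩ : Fin n))
  have hT : IsCPDS (G □ pathGraph n) T := by
    rw [Finset.coe_image]
    exact hS.isCPDS_boxProd_pathGraph hn0
  calc cpdn (G □ pathGraph n) ≤ T.card := cpdn_le_card hT
    _ = cdomNum G := by rw [Finset.card_image_of_injective _ (Prod.mk_left_injective _), hcard]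

/-- `γ_{P,c}(G □ P_n) ≤ γ_c(G)`. -/
theorem stmt_5 {α : Type*} [Fintype α]
    (G : SimpleGraph α) (hG : G.Connected)
    (hGcard : 2 ≤ Fintype.card α)
    (n : ℕ) (hn : 2 ≤ n) :
    cpdn (G □ pathGraph n) ≤ cdomNum G :=
  stmt_5_general G hG n hn
end

section
/- Let G be a connected finite simple graph with at least 3 vertices having at least two universal vertices. Let k ≥ 3 and 1 ≤ m_1 ≤ m_2 ≤ … ≤ m_k be integers, and let K_{m_1,…,m_k} be the complete multipartite graph with parts of sizes m_1, …, m_k. Then γ_{P,c}(G × K_{m_1,…,m_k}) = 2 if m_1 = m_2 = 1, and γ_{P,c}(G × K_{m_1,…,m_k}) = 3 otherwise. -/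
open SimpleGraph

variable {V : Type*} {α β : Type*}

/-!
Write `H = G × K_{m_1,…,m_k}` and call `F` a fort if no vertex outside `F` has exactly one
neighbour in `F`; a fort disjoint from `N[S]` is never monitored from `S`.

Lower bounds. For a single vertex `(g, h)`, the vertices `(g, h')` with `h' ≠ h` together with
all other vertices over the part of `h` form a fort avoiding `N[(g, h)]`: this uses that every
vertex of `G` has two neighbours and that `k ≥ 3`. A connected pair is an edge `st`, and if the
part of `t` contains two vertices `y ≠ y'`, then `(s.1, y)` and `(s.1, y')` are twins seen by
neither `s` nor `t`.

Upper bounds. Let `u, v` be universal, `w` a third vertex of `G` and `a, b, c` vertices in three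
different parts. Then `{(u, a), (v, b), (w, c)}` is a dominating triangle. If the parts of `a`
and `b` are singletons, `{(u, a), (v, b)}` dominates everything but `(v, a)` and `(u, b)`, which
are forced from `(u, c)` and `(v, c)`.
-/

section PowerDomination

variable {G : SimpleGraph V}

def IsFort (G : SimpleGraph V) (F : Set V) : Prop :=
  ∀ v ∉ F, ∀ w ∈ F, G.Adj v w → ∃ w' ∈ F, w' ≠ w ∧ G.Adj v w'

theorem not_monitored_of_isFort {S F : Set V} (hF : IsFort G F)
    (hSF : ∀ s ∈ S, s ∉ F ∧ ∀ w ∈ F, ¬ G.Adj s w) {w : V} (hw : Monitored G S w) :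
    w ∉ F := by
  induction hw with
  | mem hs => exact (hSF _ hs).1
  | dom hs hadj => exact fun hw => (hSF _ hs).2 _ hw hadj
  | prop _ hadj hall ihv ihall =>
    intro hw
    obtain ⟨w', hw', hne, hadj'⟩ := hF _ ihv _ hw hadj
    exact ihall w' hadj' hne hw'

theorem not_isPDS_of_isFort {S F : Set V} (hF : IsFort G F) (hne : F.Nonempty)
    (hSF : ∀ s ∈ S, s ∉ F ∧ ∀ w ∈ F, ¬ G.Adj s w) : ¬ IsPDS G S :=
  fun hS => hne.elim fun w hw => not_monitored_of_isFort hF hSF (hS w) hw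

theorem isFort_pair_of_twins {p q : V} (hpq : p ≠ q) (htwin : ∀ r, G.Adj r p ↔ G.Adj r q) :
    IsFort G {p, q} := by
  rintro v - w (rfl | rfl) hadj
  · exact ⟨q, by simp, hpq.symm, (htwin v).mp hadj⟩
  · exact ⟨p, by simp, hpq, (htwin v).mpr hadj⟩

theorem IsDomSet.isPDS {S : Set V} (hS : IsDomSet G S) : IsPDS G S := fun v => by
  obtain ⟨u, hu, rfl | hadj⟩ := hS v
  · exact Monitored.mem hu
  · exact Monitored.dom hu hadj

theorem SimpleGraph.IsClique.induce_connected {S : Set V} (hS : G.IsClique S)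
    (hne : S.Nonempty) : (G.induce S).Connected := by
  have := hne.to_subtype
  rw [induce_eq_top.mpr hS]
  exact connected_top

theorem adj_of_connected_induce_pair {a b : V} (hab : a ≠ b)
    (h : (G.induce {a, b}).Connected) : G.Adj a b := by
  have := (Set.nontrivial_pair hab).coe_sort
  obtain ⟨⟨z, hz⟩, hadj⟩ := h.preconnected.exists_adj_of_nontrivial ⟨a, by simp⟩
  rcases hz with rfl | rfl
  · exact (hadj.ne rfl).elim
  · exact hadj

theorem cpdn_eq_of_isCPDS {S : Finset V} {n : ℕ} (hS : IsCPDS G S) (hn : S.card = n)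
    (hmin : ∀ T : Finset V, IsCPDS G T → n ≤ T.card) : cpdn G = n :=
  le_antisymm (Nat.sInf_le ⟨S, hn, hS⟩)
    (le_csInf ⟨n, S, hn, hS⟩ fun _ ⟨T, hT, hTS⟩ => hT ▸ hmin T hTS)

end PowerDomination

theorem exists_ne_ne_of_three_le_card [Fintype V] (h : 3 ≤ Fintype.card V) (a b : V) :
    ∃ c, c ≠ a ∧ c ≠ b := by
  classical
  obtain ⟨c, -, hc⟩ := Finset.exists_mem_notMem_of_card_lt_card
    (s := {a, b}) (t := Finset.univ) (Finset.card_le_two.trans_lt h)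
  simp only [Finset.mem_insert, Finset.mem_singleton, not_or] at hc
  exact ⟨c, hc⟩

theorem exists_adj_ne_of_isUniversal [Fintype V] {G : SimpleGraph V}
    (hcard : 3 ≤ Fintype.card V) {u v : V} (huv : u ≠ v) (hu : _root_.IsUniversal G u)
    (hv : _root_.IsUniversal G v) (x y : V) : ∃ z, G.Adj x z ∧ z ≠ y := by
  obtain ⟨w, hwu, hwv⟩ := exists_ne_ne_of_three_le_card hcard u v
  obtain ⟨a, b, hab, ha, hb⟩ : ∃ a b, a ≠ b ∧ G.Adj x a ∧ G.Adj x b := by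
    by_cases hxu : x = u
    · subst hxu
      exact ⟨v, w, hwv.symm, hu v huv.symm, hu w hwu⟩
    by_cases hxv : x = v
    · subst hxv
      exact ⟨u, w, hwu.symm, hv u huv, hv w hwv⟩
    exact ⟨u, v, huv, (hu x hxu).symm, (hv x hxv).symm⟩
  by_cases hay : a = y
  · exact ⟨b, hb, fun hby => hab (hay.trans hby.symm)⟩
  · exact ⟨a, ha, hay⟩

section TensorCompleteMultipartite

variable {G : SimpleGraph α} {k : ℕ} {m : Fin k → ℕ}

local notation "K[" m "]" => completeMultipartiteGraph fun i => Fin (m i)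

theorem sigma_fin_eq_of_fst_eq {y z : Σ i, Fin (m i)} (h : y.1 = z.1) (hz : m z.1 = 1) :
    y = z := by
  obtain ⟨i, y⟩ := y
  obtain ⟨j, z⟩ := z
  obtain rfl : i = j := h
  have := y.isLt
  have := z.isLt
  exact Sigma.ext rfl (heq_of_eq (Fin.ext (by simp only at hz ⊢; omega)))

theorem isFort_tensorProd_singleton (hdeg : ∀ x y, ∃ z, G.Adj x z ∧ z ≠ y) (hk : 3 ≤ k)
    (hpos : ∀ i, 1 ≤ m i) (g : α) (h : Σ i, Fin (m i)) :
    IsFort (tensorProd G K[m]) {p | (p.1 = g ∧ p.2 ≠ h) ∨ (p.2.1 = h.1 ∧ p ≠ (g, h))} := by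
  rintro ⟨x, y⟩ hv ⟨x', y'⟩ hw ⟨hxx', hyy'⟩
  have hxg : x ≠ g := by
    rintro rfl
    obtain rfl : y = h := by_contra fun hyh => hv (Or.inl ⟨rfl, hyh⟩)
    rcases hw with ⟨rfl, -⟩ | ⟨hy', -⟩
    exacts [hxx'.ne rfl, hyy' hy'.symm]
  have hyh : y.1 ≠ h.1 := fun hyh => hv (Or.inr ⟨hyh, fun e => hxg (congrArg Prod.fst e)⟩)
  by_cases hcase : x' = g ∨ ¬ G.Adj x g
  · obtain ⟨a, hxa, hax'⟩ := hdeg x x'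
    have hag : a ≠ g := by
      rintro rfl
      rcases hcase with rfl | hxa'
      exacts [hax' rfl, hxa' hxa]
    exact ⟨(a, h), Or.inr ⟨rfl, fun e => hag (congrArg Prod.fst e)⟩,
      fun e => hax' (congrArg Prod.fst e), hxa, hyh⟩
  · obtain ⟨hx'g, hxg'⟩ : x' ≠ g ∧ G.Adj x g := by simpa only [not_or, not_not] using hcase
    have hy' : y'.1 = h.1 := (hw.resolve_left fun hw => hx'g hw.1).1
    obtain ⟨j, hjy, hjh⟩ := exists_ne_ne_of_three_le_card (by simpa using hk) y.1 h.1
    refine ⟨(g, ⟨j, ⟨0, hpos j⟩⟩), Or.inl ⟨rfl, fun e => hjh (congrArg Sigma.fst e)⟩,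
      fun e => hjh (hy' ▸ congrArg (fun p => p.2.1) e), hxg', fun e => hjy e.symm⟩

theorem not_isPDS_tensorProd_singleton (hdeg : ∀ x y, ∃ z, G.Adj x z ∧ z ≠ y) (hk : 3 ≤ k)
    (hpos : ∀ i, 1 ≤ m i) (s : α × Σ i, Fin (m i)) : ¬ IsPDS (tensorProd G K[m]) {s} := by
  obtain ⟨g, h⟩ := s
  obtain ⟨x, -, hxg⟩ := hdeg g g
  refine not_isPDS_of_isFort (isFort_tensorProd_singleton hdeg hk hpos g h)
    ⟨(x, h), Or.inr ⟨rfl, fun e => hxg (congrArg Prod.fst e)⟩⟩ ?_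
  rintro _ rfl
  refine ⟨by simp, ?_⟩
  rintro ⟨x', y'⟩ (⟨rfl, -⟩ | ⟨hy', -⟩) ⟨hgx', hhy'⟩
  exacts [hgx'.ne rfl, hhy' hy'.symm]

theorem two_le_card_of_isCPDS_tensorProd (hdeg : ∀ x y, ∃ z, G.Adj x z ∧ z ≠ y) (hk : 3 ≤ k)
    (hpos : ∀ i, 1 ≤ m i) {S : Finset (α × Σ i, Fin (m i))}
    (hS : IsCPDS (tensorProd G K[m]) S) : 2 ≤ S.card := by
  by_contra! hlt
  rcases Nat.lt_succ_iff.mp hlt |>.lt_or_eq with h0 | h1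
  · obtain rfl : S = ∅ := Finset.card_eq_zero.mp (by omega)
    obtain ⟨⟨_, hmem⟩⟩ := hS.2.nonempty
    simp at hmem
  · obtain ⟨s, rfl⟩ := Finset.card_eq_one.mp h1
    exact not_isPDS_tensorProd_singleton hdeg hk hpos s (by simpa using hS.1)

theorem not_isPDS_tensorProd_pair {s t : α × Σ i, Fin (m i)}
    (hst : (tensorProd G K[m]).Adj s t) (ht : 2 ≤ m t.2.1) :
    ¬ IsPDS (tensorProd G K[m]) {s, t} := by
  set y : Σ i, Fin (m i) := ⟨t.2.1, ⟨0, by omega⟩⟩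
  set y' : Σ i, Fin (m i) := ⟨t.2.1, ⟨1, by omega⟩⟩
  have hyy' : (s.1, y) ≠ (s.1, y') := by simp [y, y']
  refine not_isPDS_of_isFort (isFort_pair_of_twins hyy' fun r => Iff.rfl) ⟨_, Or.inl rfl⟩ ?_
  rintro _ (rfl | rfl)
  · refine ⟨?_, ?_⟩
    · rintro (e | e) <;> exact hst.2 (congrArg (fun p => p.2.1) e)
    · rintro _ (rfl | rfl) hadj <;> exact hadj.1.ne rfl
  · refine ⟨?_, ?_⟩
    · rintro (e | e) <;> exact hst.1.ne (congrArg Prod.fst e).symm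
    · rintro _ (rfl | rfl) hadj <;> exact hadj.2 rfl

theorem three_le_card_of_isCPDS_tensorProd (hdeg : ∀ x y, ∃ z, G.Adj x z ∧ z ≠ y)
    (hk : 3 ≤ k) (hpos : ∀ i, 1 ≤ m i) (hm : ∀ i j, i ≠ j → 2 ≤ m i ∨ 2 ≤ m j)
    {S : Finset (α × Σ i, Fin (m i))} (hS : IsCPDS (tensorProd G K[m]) S) : 3 ≤ S.card := by
  classical
  have h2 := two_le_card_of_isCPDS_tensorProd hdeg hk hpos hS
  by_contra! hlt
  obtain ⟨s, t, hst, rfl⟩ := Finset.card_eq_two.mp (show S.card = 2 by omega)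
  rw [Finset.coe_pair] at hS
  have hadj := adj_of_connected_induce_pair hst hS.2
  rcases hm _ _ hadj.2 with hs | ht
  · exact not_isPDS_tensorProd_pair hadj.symm hs (Set.pair_comm s t ▸ hS.1)
  · exact not_isPDS_tensorProd_pair hadj ht hS.1

section UniversalPair

variable {u v : α} (huv : u ≠ v) (hu : _root_.IsUniversal G u) (hv : _root_.IsUniversal G v)
  {a b c : Σ i, Fin (m i)} (hab : a.1 ≠ b.1) (hac : a.1 ≠ c.1) (hbc : b.1 ≠ c.1)
include huv hu hv hab hac hbc

theorem monitored_tensorProd_pair_swap (ha : ∀ y : Σ i, Fin (m i), y.1 = a.1 → y = a) :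
    Monitored (tensorProd G K[m]) {(u, a), (v, b)} (v, a) := by
  refine Monitored.prop (v := (u, c)) (Monitored.dom (Or.inr rfl) ⟨hv u huv, hbc⟩)
    ⟨hu v huv.symm, hac.symm⟩ ?_
  rintro ⟨x, y⟩ ⟨hux, -⟩ hne
  by_cases hy : y.1 = a.1
  · obtain rfl := ha y hy
    exact Monitored.dom (Or.inr rfl) ⟨hv x fun e => hne (e ▸ rfl), hab.symm⟩
  · exact Monitored.dom (Or.inl rfl) ⟨hux, Ne.symm hy⟩

theorem isCPDS_tensorProd_pair (ha : ∀ y : Σ i, Fin (m i), y.1 = a.1 → y = a)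
    (hb : ∀ y : Σ i, Fin (m i), y.1 = b.1 → y = b) :
    IsCPDS (tensorProd G K[m]) {(u, a), (v, b)} := by
  refine ⟨fun ⟨x, y⟩ => ?_, IsClique.induce_connected
    (isClique_pair.mpr fun _ => ⟨hu v huv.symm, hab⟩) (Set.insert_nonempty _ _)⟩
  by_cases hya : y.1 = a.1
  · by_cases hxv : x = v
    · rw [hxv, ha y hya]
      exact monitored_tensorProd_pair_swap huv hu hv hab hac hbc ha
    · exact Monitored.dom (Or.inr rfl) ⟨hv x hxv, hab.symm.trans_eq hya.symm⟩
  by_cases hxu : x = u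
  · subst hxu
    by_cases hyb : y.1 = b.1
    · rw [hb y hyb, Set.pair_comm]
      exact monitored_tensorProd_pair_swap huv.symm hv hu hab.symm hbc hac hb
    · exact Monitored.dom (Or.inr rfl) ⟨hv x huv, Ne.symm hyb⟩
  · exact Monitored.dom (Or.inl rfl) ⟨hu x hxu, Ne.symm hya⟩

theorem isCPDS_tensorProd_triple {w : α} (hwu : w ≠ u) (hwv : w ≠ v) :
    IsCPDS (tensorProd G K[m]) {(u, a), (v, b), (w, c)} := by
  refine ⟨IsDomSet.isPDS fun ⟨x, y⟩ => ?_,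
    IsClique.induce_connected ?_ (Set.insert_nonempty _ _)⟩
  · by_cases hxu : x = u
    · subst hxu
      by_cases hyb : y.1 = b.1
      · exact ⟨(w, c), by simp, Or.inr ⟨(hu w hwu).symm, hbc.symm.trans_eq hyb.symm⟩⟩
      · exact ⟨(v, b), by simp, Or.inr ⟨hv x huv, Ne.symm hyb⟩⟩
    by_cases hya : y.1 = a.1
    · by_cases hxv : x = v
      · subst hxv
        exact ⟨(w, c), by simp, Or.inr ⟨(hv w hwv).symm, hac.symm.trans_eq hya.symm⟩⟩
      · exact ⟨(v, b), by simp, Or.inr ⟨hv x hxv, hab.symm.trans_eq hya.symm⟩⟩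
    · exact ⟨(u, a), by simp, Or.inr ⟨hu x hxu, Ne.symm hya⟩⟩
  · simp only [isClique_insert, isClique_singleton, Set.mem_insert_iff, Set.mem_singleton_iff,
      forall_eq_or_imp, forall_eq]
    exact ⟨⟨trivial, fun _ => ⟨hv w hwv, hbc⟩⟩, fun _ => ⟨hu v huv.symm, hab⟩,
      fun _ => ⟨hu w hwu, hac⟩⟩

end UniversalPair

end TensorCompleteMultipartite

theorem two_le_or_two_le_of_monotone {k : ℕ} (hk : 2 ≤ k) {m : Fin k → ℕ} (hmono : Monotone m)
    (hpos : ∀ i, 1 ≤ m i) (hm : ¬ (m ⟨0, by omega⟩ = 1 ∧ m ⟨1, by omega⟩ = 1)) {i j : Fin k}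
    (hij : i ≠ j) : 2 ≤ m i ∨ 2 ≤ m j := by
  have h1 : 2 ≤ m ⟨1, by omega⟩ := by
    have := hmono (show (⟨0, by omega⟩ : Fin k) ≤ ⟨1, by omega⟩ from Fin.mk_le_mk.mpr zero_le_one)
    have := hpos ⟨0, by omega⟩
    omega
  have hle : ∀ l : Fin k, 1 ≤ l.val → 2 ≤ m l := fun l hl =>
    h1.trans (hmono (Fin.mk_le_of_le_val hl))
  have := Fin.val_ne_of_ne hij
  by_cases hi : 1 ≤ i.val
  exacts [Or.inl (hle i hi), Or.inr (hle j (by omega))]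

/-- `γ_{P,c}(G × K_{m₁,…,m_k})` for `G` with at least two universal vertices. -/
theorem stmt_18 {α : Type*} [Fintype α]
    (G : SimpleGraph α)
    (hGcard : 3 ≤ Fintype.card α)
    (hGuniv : ∃ u v, u ≠ v ∧ _root_.IsUniversal G u ∧ _root_.IsUniversal G v)
    (k : ℕ) (hk : 3 ≤ k) (m : Fin k → ℕ) (hmono : Monotone m) (hpos : ∀ i, 1 ≤ m i) :
    (m ⟨0, by omega⟩ = 1 ∧ m ⟨1, by omega⟩ = 1 →
      cpdn (tensorProd G (completeMultipartiteGraph (fun i => Fin (m i)))) = 2) ∧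
    (¬ (m ⟨0, by omega⟩ = 1 ∧ m ⟨1, by omega⟩ = 1) →
      cpdn (tensorProd G (completeMultipartiteGraph (fun i => Fin (m i)))) = 3) := by
  classical
  obtain ⟨u, v, huv, hu, hv⟩ := hGuniv
  obtain ⟨w, hwu, hwv⟩ := exists_ne_ne_of_three_le_card hGcard u v
  have hdeg := exists_adj_ne_of_isUniversal hGcard huv hu hv
  let a : Σ i, Fin (m i) := ⟨⟨0, by omega⟩, ⟨0, hpos _⟩⟩
  let b : Σ i, Fin (m i) := ⟨⟨1, by omega⟩, ⟨0, hpos _⟩⟩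
  let c : Σ i, Fin (m i) := ⟨⟨2, by omega⟩, ⟨0, hpos _⟩⟩
  have hab : a.1 ≠ b.1 := by simp [a, b]
  have hac : a.1 ≠ c.1 := by simp [a, c]
  have hbc : b.1 ≠ c.1 := by simp [b, c]
  constructor
  · rintro ⟨hm0, hm1⟩
    have hS := isCPDS_tensorProd_pair huv hu hv hab hac hbc
      (fun y hy => sigma_fin_eq_of_fst_eq hy hm0) (fun y hy => sigma_fin_eq_of_fst_eq hy hm1)
    rw [← Finset.coe_pair] at hS
    exact cpdn_eq_of_isCPDS hS (Finset.card_pair (by simp [huv]))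
      fun T hT => two_le_card_of_isCPDS_tensorProd hdeg hk hpos hT
  · intro hm
    have hS := isCPDS_tensorProd_triple huv hu hv hab hac hbc hwu hwv
    rw [← Finset.coe_pair, ← Finset.coe_insert] at hS
    refine cpdn_eq_of_isCPDS hS (Finset.card_eq_three.mpr ⟨_, _, _, ?_, ?_, ?_, rfl⟩)
      fun T hT => three_le_card_of_isCPDS_tensorProd hdeg hk hpos
        (fun i j => two_le_or_two_le_of_monotone (by omega) hmono hpos hm) hT
    all_goals simp [huv, hwu.symm, hwv.symm]
end
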